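/- arXiv:2510.00580 — 4 statements merged into one kernel-verified Lean document; each statement's English description precedes it below -/
import Mathlib

section
/- Let $n \geq 1$, let $0 \leq k < n$, and let $\sigma \in S_n$ be a permutation such that $\sigma(\{1,\ldots,k\}) \subseteq \{1,\ldots,k+1\}$. Then there exist unique permutations $\sigma_1, \sigma_2, \tau \in S_n$ with $\sigma = \tau\sigma_1\sigma_2$ such that: (1) $\sigma_1$ restricted to $\{k+1,\ldots,n\}$ is the identity, (2) $\sigma_2$ restricted to $\{1,\ldots,k\}$ is the identity, and (3) $\tau$ is the identity if $\sigma^{-1}(k+1) > k$, and a transposition otherwise. -/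
/-!
Write `s = {1, …, k}` and `c = k + 1`, so that `σ` maps `s` into `insert c s`. Once `τ` is
fixed, `τ⁻¹ σ` must map `s` to itself, and such a permutation factors uniquely as a permutation
supported on `s` times one fixing `s` pointwise. If `σ⁻¹ c ∉ s` then `σ` already maps `s` to
itself and `τ = 1`. Otherwise `σ(s)` contains `c ∉ s` and has `|s|` elements, so it misses a
unique `m ∈ s`, and `τ` is forced to be the transposition `(m c)`: `τ(s) = σ(s)` must contain
`c`, so `τ` moves some `w ∈ s` to `c`, and `w` can only be the point of `s` missing from `σ(s)`.
-/

open Set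

namespace Equiv.Perm

variable {α : Type*} {s : Set α}

theorem mapsTo_of_forall_notMem_apply_eq {a : Perm α} (ha : ∀ x ∉ s, a x = x) :
    MapsTo a s s := by
  intro x hx
  by_contra h
  have hax : a x = x := a.injective (ha _ h)
  exact h (by rwa [hax])

theorem mapsTo_inv_mul_of_eq_mul_mul {σ t a b : Perm α} (h : σ = t * a * b)
    (ha : ∀ x ∉ s, a x = x) (hb : ∀ x ∈ s, b x = x) : MapsTo (t⁻¹ * σ) s s := by
  intro x hx
  rw [h, mul_assoc, inv_mul_cancel_left, mul_apply, hb x hx]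
  exact mapsTo_of_forall_notMem_apply_eq ha hx

theorem eq_and_eq_of_mul_eq_mul {a b a' b' : Perm α} (ha : ∀ x ∉ s, a x = x)
    (ha' : ∀ x ∉ s, a' x = x) (hb : ∀ x ∈ s, b x = x) (hb' : ∀ x ∈ s, b' x = x)
    (h : a * b = a' * b') : a = a' ∧ b = b' := by
  have haa' : a = a' := by
    ext x
    by_cases hx : x ∈ s
    · simpa [hb x hx, hb' x hx] using congr($h x)
    · rw [ha x hx, ha' x hx]
  subst haa'
  exact ⟨rfl, mul_left_cancel h⟩

theorem exists_mul_eq_of_mapsTo [Finite α] {σ : Perm α} (hσ : MapsTo σ s s) :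
    ∃ a b : Perm α, σ = a * b ∧ (∀ x ∉ s, a x = x) ∧ (∀ x ∈ s, b x = x) := by
  classical
  set a := ofSubtype (σ.subtypePermOfFintype (p := (· ∈ s)) hσ)
  refine ⟨a, a⁻¹ * σ, by group, fun x hx => ofSubtype_apply_of_not_mem _ hx, fun x hx => ?_⟩
  rw [mul_apply, inv_eq_iff_eq, ofSubtype_apply_of_mem _ hx]
  rfl

theorem mapsTo_of_inv_apply_notMem {c : α} {σ : Perm α} (hσ : MapsTo σ s (insert c s))
    (hσc : σ⁻¹ c ∉ s) : MapsTo σ s s := by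
  intro x hx
  refine (hσ hx).resolve_left fun h => hσc ?_
  rwa [inv_eq_iff_eq.mpr h.symm]

theorem exists_mem_forall_apply_ne [Finite α] {c : α} (hc : c ∉ s) {σ : Perm α}
    (hσc : σ⁻¹ c ∈ s) : ∃ m ∈ s, ∀ x ∈ s, σ x ≠ m := by
  by_contra! h
  have hsub : insert c s ⊆ σ '' s := by
    refine insert_subset ⟨_, hσc, σ.apply_symm_apply c⟩ fun m hm => ?_
    obtain ⟨x, hx, rfl⟩ := h m hm
    exact mem_image_of_mem σ hx
  have := ncard_le_ncard hsub
  rw [ncard_insert_of_notMem hc, ncard_image_of_injective _ σ.injective] at this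
  omega

theorem mapsTo_swap_mul [DecidableEq α] {c m : α} {σ : Perm α} (hσ : MapsTo σ s (insert c s))
    (hm : m ∈ s) (hσm : ∀ x ∈ s, σ x ≠ m) : MapsTo (swap m c * σ) s s := by
  intro x hx
  rw [mul_apply]
  by_cases h : σ x = c
  · rwa [h, swap_apply_right]
  · rw [swap_apply_of_ne_of_ne (hσm x hx) h]
    exact (hσ hx).resolve_left h

theorem IsSwap.eq_swap_of_apply_eq [DecidableEq α] {t : Perm α} (ht : t.IsSwap) {w c : α}
    (hne : w ≠ c) (h : t w = c) : t = swap w c := by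
  obtain ⟨x, y, hxy, rfl⟩ := ht
  rw [swap_apply_def] at h
  split_ifs at h with hwx hwy
  · rw [hwx, h]
  · rw [hwy, h, swap_comm]
  · exact absurd h hne

theorem IsSwap.exists_eq_swap_of_mapsTo_inv_mul [DecidableEq α] {c : α} (hc : c ∉ s)
    {σ t : Perm α} (ht : t.IsSwap) (hσc : σ⁻¹ c ∈ s) (h : MapsTo (t⁻¹ * σ) s s) :
    ∃ w ∈ s, t = swap w c := by
  have hw : t⁻¹ c ∈ s := by simpa using h hσc
  exact ⟨_, hw, ht.eq_swap_of_apply_eq (ne_of_mem_of_not_mem hw hc) (t.apply_symm_apply c)⟩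

theorem IsSwap.eq_of_mapsTo_inv_mul [DecidableEq α] [Finite α] {c : α} (hc : c ∉ s)
    {σ t t' : Perm α} (ht : t.IsSwap) (ht' : t'.IsSwap) (hσc : σ⁻¹ c ∈ s)
    (h : MapsTo (t⁻¹ * σ) s s) (h' : MapsTo (t'⁻¹ * σ) s s) : t = t' := by
  obtain ⟨w, hw, rfl⟩ := ht.exists_eq_swap_of_mapsTo_inv_mul hc hσc h
  obtain ⟨w', hw', rfl⟩ := ht'.exists_eq_swap_of_mapsTo_inv_mul hc hσc h'
  by_contra hne
  have hw'c : w' ≠ c := ne_of_mem_of_not_mem hw' hc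
  -- `swap w c` fixes `w'`, so `w' = σ x` with `x ∈ s`, while `swap w' c` sends `w'` out of `s`.
  have hx : σ⁻¹ w' ∈ s := by
    have := perm_symm_mapsTo_of_mapsTo _ h hw'
    rwa [← inv_def, mul_inv_rev, inv_inv, mul_apply,
      swap_apply_of_ne_of_ne (fun e => hne (by rw [e])) hw'c] at this
  exact hc (by simpa using h' hx)

theorem existsUnique_mul_mul_of_mapsTo_insert [DecidableEq α] [Finite α] {c : α} (hc : c ∉ s)
    (σ : Perm α) (hσ : MapsTo σ s (insert c s)) :
    ∃! p : Perm α × Perm α × Perm α,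
      σ = p.1 * p.2.1 * p.2.2 ∧ (∀ x ∉ s, p.2.1 x = x) ∧ (∀ x ∈ s, p.2.2 x = x) ∧
      (σ⁻¹ c ∉ s → p.1 = 1) ∧ (σ⁻¹ c ∈ s → p.1.IsSwap) := by
  refine existsUnique_of_exists_of_unique ?_ ?_
  · obtain ⟨t, ht1, ht2, hmaps⟩ : ∃ t : Perm α, (σ⁻¹ c ∉ s → t = 1) ∧
        (σ⁻¹ c ∈ s → t.IsSwap) ∧ MapsTo (t⁻¹ * σ) s s := by
      by_cases hσc : σ⁻¹ c ∈ s
      · obtain ⟨m, hm, hσm⟩ := exists_mem_forall_apply_ne hc hσc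
        refine ⟨swap m c, (absurd hσc ·), fun _ => ⟨m, c, ne_of_mem_of_not_mem hm hc, rfl⟩, ?_⟩
        rw [swap_inv]
        exact mapsTo_swap_mul hσ hm hσm
      · exact ⟨1, fun _ => rfl, (absurd · hσc), by simpa using mapsTo_of_inv_apply_notMem hσ hσc⟩
    obtain ⟨a, b, hab, ha, hb⟩ := exists_mul_eq_of_mapsTo hmaps
    exact ⟨(t, a, b), by rw [mul_assoc, ← hab, mul_inv_cancel_left], ha, hb, ht1, ht2⟩
  · rintro ⟨t, a, b⟩ ⟨t', a', b'⟩ ⟨h, ha, hb, ht1, ht2⟩ ⟨h', ha', hb', ht1', ht2'⟩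
    dsimp only at h ha hb ht1 ht2 h' ha' hb' ht1' ht2'
    have htt' : t = t' := by
      by_cases hσc : σ⁻¹ c ∈ s
      · exact (ht2 hσc).eq_of_mapsTo_inv_mul hc (ht2' hσc) hσc
          (mapsTo_inv_mul_of_eq_mul_mul h ha hb) (mapsTo_inv_mul_of_eq_mul_mul h' ha' hb')
      · rw [ht1 hσc, ht1' hσc]
    subst htt'
    rw [mul_assoc] at h h'
    obtain ⟨rfl, rfl⟩ := eq_and_eq_of_mul_eq_mul ha ha' hb hb' (mul_left_cancel (h.symm.trans h'))
    rfl

end Equiv.Perm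

theorem unique_decomposition_permutation_general (n k : ℕ) (hk : k < n)
    (σ : Equiv.Perm (Fin n))
    (hσ : ∀ x : Fin n, x.val < k → (σ x).val < k + 1) :
    ∃! p : Equiv.Perm (Fin n) × Equiv.Perm (Fin n) × Equiv.Perm (Fin n),
      σ = p.1 * p.2.1 * p.2.2 ∧
      (∀ x : Fin n, k ≤ x.val → p.2.1 x = x) ∧
      (∀ x : Fin n, x.val < k → p.2.2 x = x) ∧
      (k ≤ (σ⁻¹ ⟨k, hk⟩).val → p.1 = 1) ∧
      ((σ⁻¹ ⟨k, hk⟩).val < k → p.1.IsSwap) := by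
  have hσ' : MapsTo σ {x | x.val < k} (insert ⟨k, hk⟩ {x | x.val < k}) := fun x hx =>
    (Nat.lt_succ_iff_lt_or_eq.mp (hσ x hx)).elim Or.inr fun h => Or.inl (Fin.ext h)
  simpa only [mem_ofPred_eq, not_lt] using
    Equiv.Perm.existsUnique_mul_mul_of_mapsTo_insert (by simp) σ hσ'

theorem unique_decomposition_permutation (n k : ℕ) (hn : 1 ≤ n) (hk : k < n)
    (σ : Equiv.Perm (Fin n))
    (hσ : ∀ x : Fin n, x.val < k → (σ x).val < k + 1) :
    ∃! p : Equiv.Perm (Fin n) × Equiv.Perm (Fin n) × Equiv.Perm (Fin n),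
      σ = p.1 * p.2.1 * p.2.2 ∧
      (∀ x : Fin n, k ≤ x.val → p.2.1 x = x) ∧
      (∀ x : Fin n, x.val < k → p.2.2 x = x) ∧
      (k ≤ (σ⁻¹ ⟨k, hk⟩).val → p.1 = 1) ∧
      ((σ⁻¹ ⟨k, hk⟩).val < k → p.1.IsSwap) :=
  unique_decomposition_permutation_general n k hk σ hσ
end

section
/- Let $n \geq 2$, $r \geq 1$, and $0 \leq k_1 < k_2 < \ldots < k_r < n-1$. Let $s_i \in S_n$ denote the transposition $(i\ \ i+1)$ and let $I = \{s_1,\ldots,s_{n-1}\} \setminus \{s_{k_1+1},\ldots,s_{k_r+1}\}$. Suppose $\sigma \in S_n$ is $I$-reduced (i.e., $\ell(v\sigma) = \ell(v) + \ell(\sigma)$ for all $v$ in the parabolic subgroup generated by $I$) and satisfies $\sigma(\{1,\ldots,k_j\}) \subseteq \{1,\ldots,k_j+1\}$ for all $1 \leq j \leq r$. Then $\sigma$ can be uniquely written as $\sigma = w_1 w_2 \cdots w_r$ where for each $1 \leq i \leq r-1$, $w_i = s_{k_i+1} s_{k_i+2} \cdots s_{k_i+t_i}$ for some $0 \leq t_i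 \leq k_{i+1} - k_i$, and $w_r = s_{k_r+1} \cdots s_{k_r+t_r}$ for some $0 \leq t_r \leq n-1-k_r$. -/
/- Statement 1: unique factorization `σ = w₁ ⋯ w_r` of an `I`-reduced
permutation satisfying `σ({1,…,k_j}) ⊆ {1,…,k_j+1}`, with
`w_i = s_{k_i+1} s_{k_i+2} ⋯ s_{k_i+t_i}`.
Conventions: 1-based `s_j` is `simpleRefl n (j-1)`; `ℓ` is the inversion count,
which is the Coxeter length of `Sₙ`. -/

/-- The simple reflection `s_{i+1}` (1-based): swap of 0-based positions `i`, `i+1`. -/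
def simpleRefl (n i : ℕ) : Equiv.Perm (Fin n) :=
  if h : i + 1 < n then Equiv.swap ⟨i, Nat.lt_of_succ_lt h⟩ ⟨i + 1, h⟩ else 1

/-- The Coxeter length of a permutation of `Fin n`: its number of inversions. -/
def lenPerm {n : ℕ} (σ : Equiv.Perm (Fin n)) : ℕ :=
  (Finset.univ.filter fun p : Fin n × Fin n => p.1 < p.2 ∧ σ p.2 < σ p.1).card

/-!
Shift to 0-based values and transport everything to permutations of `ℕ` fixing all `x ≥ n`.
There `w_i` is the cycle `k_i ↦ k_i + 1 ↦ ⋯ ↦ k_i + t_i ↦ k_i`, and being `I`-reduced says that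
`σ⁻¹` is increasing on each block of values `[0, k_1]`, `[k_1 + 1, k_2]`, …, `[k_r + 1, n - 1]`.
Such a `σ` is built greedily: each position takes the least value of its block not used by
earlier positions. Together with `σ([0, k_j)) ⊆ [0, k_j]` this forces `σ` to fix `[0, k_1)` and
to agree with `w_1` on `[0, k_2)` (reading `k_{r+1}` as `n - 1`), where `k_1 + t_1` is the
position of the value `k_1`, capped at `k_2`. Then `w_1⁻¹ σ` fixes `[0, k_2)` and satisfies the
same hypotheses for `k_2 < ⋯ < k_r`. Conversely, `w_1` is read off from any such product on
`[0, k_2)`, which gives uniqueness.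
-/

open Equiv Set

-- Each position is sent to the least value of `S` not taken by earlier positions.
theorem eqOn_Iio_of_strictMonoOn_symm {α β : Type*} [LinearOrder α] [WellFoundedLT α]
    [LinearOrder β] {f g : α ≃ β} {S : Set β} {b : α}
    (hf : StrictMonoOn f.symm S) (hg : StrictMonoOn g.symm S)
    (hout : ∀ x < b, f x ∉ S ∨ g x ∉ S → f x = g x) : ∀ x < b, f x = g x := by
  have not_lt : ∀ {f g : α ≃ β}, StrictMonoOn g.symm S → ∀ x, (∀ y < x, f y = g y) →
      f x ∈ S → g x ∈ S → ¬ f x < g x := by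
    intro f g hg x ih hfx hgx hlt
    have hy : g.symm (f x) < x := by simpa using hg hfx hgx hlt
    have := ih _ hy
    rw [g.apply_symm_apply] at this
    exact hy.ne (f.injective this)
  intro x
  induction x using WellFoundedLT.induction with
  | _ x ih =>
    intro hx
    have ih' : ∀ y < x, f y = g y := fun y hy => ih y hy (hy.trans hx)
    by_contra hne
    have hfx : f x ∈ S := by_contra fun h => hne (hout x hx (Or.inl h))
    have hgx : g x ∈ S := by_contra fun h => hne (hout x hx (Or.inr h))
    rcases lt_or_gt_of_ne hne with hlt | hlt
    · exact not_lt hg x ih' hfx hgx hlt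
    · exact not_lt hf x (fun y hy => (ih' y hy).symm) hgx hfx hlt

theorem strictMonoOn_Icc_of_lt_add_one {g : ℕ → ℕ} {lo hi : ℕ}
    (h : ∀ u, lo ≤ u → u < hi → g u < g (u + 1)) : StrictMonoOn g (Icc lo hi) :=
  strictMonoOn_of_lt_succ ordConnected_Icc fun u _ hu hu1 =>
    h u hu.1 (by simpa [Order.succ_eq_add_one, Nat.add_one_le_iff] using hu1.2)

namespace Equiv.Perm

theorem apply_le_of_forall_lt_apply_eq {f : Perm ℕ} {N x : ℕ} (htop : ∀ y, N < y → f y = y)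
    (hx : x ≤ N) : f x ≤ N := by
  by_contra! hlt
  have := f.injective (htop _ hlt)
  omega

theorem eqOn_Iio_one {f : Perm ℕ} {c a b : ℕ} (hb : b ≤ a + 1) (hfix : ∀ x < c, f x = x)
    (hmono : StrictMonoOn ⇑f⁻¹ (Icc c a)) (hle : ∀ x < b, f x ≤ a) : ∀ x < b, f x = x := by
  refine eqOn_Iio_of_strictMonoOn_symm (g := 1) hmono (fun _ _ _ _ h => h) fun x hx hout => ?_
  rcases hout with hfx | hx'
  · have hfc : f x < c := by simp only [mem_Icc, not_and, not_le] at hfx; have := hle x hx; omega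
    exact f.injective (hfix _ hfc)
  · exact hfix x (by simp only [one_apply, mem_Icc, not_and, not_le] at hx'; omega)

theorem eq_one_of_strictMonoOn_inv {f : Perm ℕ} {c N : ℕ} (hfix : ∀ x < c, f x = x)
    (htop : ∀ x, N < x → f x = x) (hmono : StrictMonoOn ⇑f⁻¹ (Icc c N)) : f = 1 := by
  ext x
  rcases Nat.lt_or_ge N x with hx | hx
  · exact htop x hx
  · exact eqOn_Iio_one le_rfl hfix hmono
      (fun y hy => apply_le_of_forall_lt_apply_eq htop (Nat.lt_succ_iff.mp hy)) x
      (Nat.lt_succ_of_le hx)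

end Equiv.Perm

theorem strictMonoOn_Iic_add_one {K : ℕ → ℕ} {r : ℕ} (hK : StrictMonoOn K (Iic (r + 1))) :
    StrictMonoOn (fun i => K (i + 1)) (Iic r) := fun i hi j hj hij =>
  hK (by simp at hi ⊢; omega) (by simp at hj ⊢; omega) (by omega)

/-- `s_a s_{a+1} ⋯ s_{a+t-1}` acting on `ℕ`: the cycle `a ↦ a + 1 ↦ ⋯ ↦ a + t ↦ a`. -/
def climb (a t : ℕ) : Perm ℕ := ((List.range t).map fun j => swap (a + j) (a + j + 1)).prod

theorem climb_apply (a t x : ℕ) :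
    climb a t x = if x < a then x else if x < a + t then x + 1 else if x = a + t then a else x := by
  induction t generalizing x with
  | zero =>
    simp only [climb, List.range_zero, List.map_nil, List.prod_nil, Perm.one_apply]
    split_ifs <;> omega
  | succ t ih =>
    rw [climb, List.range_succ, List.map_append, List.prod_append, List.map_singleton,
      List.prod_singleton, Perm.mul_apply, ← climb, ih, swap_apply_def]
    split_ifs <;> omega

theorem climb_apply_of_add_lt {a t x : ℕ} (h : a + t < x) : climb a t x = x := by
  rw [climb_apply]
  split_ifs <;> omega

theorem climb_inv_apply (a t v : ℕ) : (climb a t)⁻¹ v =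
    if v < a then v else if v = a then a + t else if v ≤ a + t then v - 1 else v := by
  rw [Perm.inv_eq_iff_eq, climb_apply]
  split_ifs <;> omega

theorem climb_inv_apply_of_add_lt {a t v : ℕ} (h : a + t < v) : (climb a t)⁻¹ v = v :=
  Perm.inv_eq_iff_eq.mpr (climb_apply_of_add_lt h).symm

theorem climb_inv_apply_le {a t m v : ℕ} (h : a + t ≤ m) (hv : v ≤ m) : (climb a t)⁻¹ v ≤ m := by
  rw [climb_inv_apply]
  split_ifs <;> omega

theorem climb_inv_strictMonoOn (a t b : ℕ) : StrictMonoOn ⇑(climb a t)⁻¹ (Icc (a + 1) b) := by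
  intro v hv w hw hvw
  simp only [mem_Icc] at hv hw
  simp only [climb_inv_apply]
  split_ifs <;> omega

theorem climb_injective_of_eqOn {a b t t' : ℕ} (ht : t ≤ b - a) (ht' : t' ≤ b - a)
    (h : ∀ x < b, climb a t x = climb a t' x) : t = t' := by
  by_contra hne
  have := h (a + min t t') (by omega)
  rw [climb_apply, climb_apply] at this
  split_ifs at this <;> omega

theorem Equiv.Perm.exists_eqOn_climb {f : Perm ℕ} {a b : ℕ} (hfix : ∀ x < a, f x = x)
    (hmono : StrictMonoOn ⇑f⁻¹ (Icc (a + 1) b)) (hle : ∀ x < b, f x ≤ b) :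
    ∃ t ≤ b - a, ∀ x < b, f x = climb a t x := by
  set p := f⁻¹ a
  have hfp : f p = a := f.apply_symm_apply a
  have hpa : a ≤ p := by
    by_contra! hlt
    have := hfix p hlt
    omega
  have hlow : ∀ x, f x ≤ a → x < a ∨ x = p := by
    intro x hx
    rcases hx.lt_or_eq with hlt | heq
    · exact Or.inl (f.injective (hfix _ hlt) ▸ hlt)
    · exact Or.inr (f.injective (heq.trans hfp.symm))
  refine ⟨min p b - a, by omega, eqOn_Iio_of_strictMonoOn_symm hmono (climb_inv_strictMonoOn ..) ?_⟩
  intro x hx hout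
  have hfx := hle x hx
  rcases Nat.lt_or_ge a (f x) with hfa | hfa
  · have hxa : a ≤ x := by
      by_contra! hxa
      rw [hfix x hxa] at hfa
      omega
    have hxp : x ≠ p := by rintro rfl; omega
    have := climb_apply a (min p b - a) x
    simp only [mem_Icc, not_and, not_le] at hout
    split_ifs at this <;> omega
  · rcases hlow x hfa with hxa | rfl
    · rw [hfix x hxa, climb_apply, if_pos hxa]
    · rw [hfp, climb_apply]
      split_ifs <;> omega

theorem prod_climb_apply_of_lt {r x : ℕ} {K t : ℕ → ℕ} (hx : ∀ i < r, x < K i) :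
    ((List.range r).map fun i => climb (K i) (t i)).prod x = x := by
  induction r with
  | zero => rfl
  | succ r ih =>
    rw [List.range_succ, List.map_append, List.prod_append, List.map_singleton,
      List.prod_singleton, Perm.mul_apply, climb_apply, if_pos (hx r r.lt_succ_self)]
    exact ih fun i hi => hx i (hi.trans r.lt_succ_self)

theorem prod_climb_succ (r : ℕ) (K t : ℕ → ℕ) :
    ((List.range (r + 1)).map fun i => climb (K i) (t i)).prod =
      climb (K 0) (t 0) * ((List.range r).map fun i => climb (K (i + 1)) (t (i + 1))).prod := by
  rw [List.range_succ_eq_map, List.map_cons, List.prod_cons, List.map_map]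
  rfl

theorem eq_of_prod_climb_eq (r : ℕ) {K t t' : ℕ → ℕ} (hK : StrictMonoOn K (Iic r))
    (ht : ∀ i < r, t i ≤ K (i + 1) - K i) (ht' : ∀ i < r, t' i ≤ K (i + 1) - K i)
    (h : ((List.range r).map fun i => climb (K i) (t i)).prod =
      ((List.range r).map fun i => climb (K i) (t' i)).prod) :
    ∀ i < r, t i = t' i := by
  induction r generalizing K t t' with
  | zero => simp
  | succ r ih =>
    rw [prod_climb_succ, prod_climb_succ] at h
    have hfix : ∀ (s : ℕ → ℕ), ∀ x < K 1,
        ((List.range r).map fun i => climb (K (i + 1)) (s (i + 1))).prod x = x := fun s x hx =>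
      prod_climb_apply_of_lt fun i hi =>
        hx.trans_le (hK.monotoneOn (by simp) (by simp; omega) (by omega))
    have h0 : t 0 = t' 0 := by
      refine climb_injective_of_eqOn (ht 0 (by omega)) (ht' 0 (by omega)) fun x hx => ?_
      simpa [Perm.mul_apply, hfix t x hx, hfix t' x hx] using congrArg (· x) h
    rw [h0] at h
    have htail := ih (K := fun i => K (i + 1)) (t := fun i => t (i + 1)) (t' := fun i => t' (i + 1))
      (strictMonoOn_Iic_add_one hK)
      (fun i hi => ht (i + 1) (by omega)) (fun i hi => ht' (i + 1) (by omega)) (mul_left_cancel h)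
    rintro (_ | i) hi
    · exact h0
    · exact htail i (by omega)

theorem exists_eq_prod_climb (r : ℕ) {c : ℕ} {K : ℕ → ℕ} {f : Perm ℕ}
    (hK : StrictMonoOn K (Iic r))
    (hfix : ∀ x < c, f x = x) (htop : ∀ x, K r < x → f x = x)
    (hmono₀ : StrictMonoOn ⇑f⁻¹ (Icc c (K 0)))
    (hmono : ∀ i < r, StrictMonoOn ⇑f⁻¹ (Icc (K i + 1) (K (i + 1))))
    (hle : ∀ i < r, ∀ x < K i, f x ≤ K i) :
    ∃ t : ℕ → ℕ, (∀ i < r, t i ≤ K (i + 1) - K i) ∧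
      f = ((List.range r).map fun i => climb (K i) (t i)).prod := by
  induction r generalizing c K f with
  | zero => exact ⟨0, by simp, Perm.eq_one_of_strictMonoOn_inv hfix htop hmono₀⟩
  | succ r ih =>
    have hKle : ∀ i ≤ r + 1, ∀ j ≤ r + 1, i ≤ j → K i ≤ K j := fun i hi j hj =>
      hK.monotoneOn (mem_Iic.mpr hi) (mem_Iic.mpr hj)
    have hle' : ∀ i ≤ r + 1, ∀ x < K i, f x ≤ K i := by
      intro i hi x hx
      rcases hi.lt_or_eq with hi | rfl
      · exact hle i hi x hx
      · exact Perm.apply_le_of_forall_lt_apply_eq htop hx.le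
    have hfix₀ := Perm.eqOn_Iio_one (Nat.le_succ _) hfix hmono₀ (hle 0 r.succ_pos)
    obtain ⟨t₀, ht₀, hf₀⟩ := Perm.exists_eqOn_climb hfix₀ (hmono 0 r.succ_pos) (hle' 1 (by omega))
    have hK₁ : ∀ i, 1 ≤ i → i ≤ r + 1 → K 0 + t₀ ≤ K i := fun i h1 hi => by
      have := hKle 0 (by omega) 1 (by omega) (by omega)
      have := hKle 1 (by omega) i hi h1
      simp only [zero_add] at ht₀
      omega
    obtain ⟨t', ht', hf'⟩ := ih (c := K 1) (K := fun i => K (i + 1)) (f := (climb (K 0) t₀)⁻¹ * f)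
      (strictMonoOn_Iic_add_one hK)
      (fun x hx => by rw [Perm.mul_apply, hf₀ x hx, Perm.inv_eq_iff_eq])
      (fun x hx => by
        rw [Perm.mul_apply, htop x hx,
          climb_inv_apply_of_add_lt ((hK₁ (r + 1) (by omega) le_rfl).trans_lt hx)])
      ((subsingleton_Icc_of_ge le_rfl).strictMonoOn _)
      (fun i hi => (hmono (i + 1) (by omega)).congr fun v hv => by
        rw [mul_inv_rev, inv_inv, Perm.mul_apply,
          climb_apply_of_add_lt ((hK₁ (i + 1) (by omega) (by omega)).trans_lt hv.1)])
      (fun i hi x hx =>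
        climb_inv_apply_le (hK₁ (i + 1) (by omega) (by omega)) (hle' (i + 1) (by omega) x hx))
    refine ⟨fun i => if i = 0 then t₀ else t' (i - 1), ?_, ?_⟩
    · rintro (_ | i) hi
      · simpa using ht₀
      · simpa using ht' i (by omega)
    · rw [prod_climb_succ, if_pos rfl, ← inv_mul_eq_iff_eq_mul, hf']
      simp

abbrev toNatPerm (n : ℕ) : Perm (Fin n) →* Perm ℕ := Perm.extendDomainHom Fin.equivSubtype

theorem toNatPerm_apply_of_lt {n x : ℕ} (σ : Perm (Fin n)) (hx : x < n) :
    toNatPerm n σ x = σ ⟨x, hx⟩ := by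
  simpa using Perm.extendDomain_apply_image σ Fin.equivSubtype ⟨x, hx⟩

theorem toNatPerm_injective (n : ℕ) : Function.Injective (toNatPerm n) :=
  Perm.extendDomainHom_injective _

theorem toNatPerm_apply_of_le {n x : ℕ} (σ : Perm (Fin n)) (hx : n ≤ x) : toNatPerm n σ x = x :=
  Perm.extendDomain_apply_not_subtype σ _ (not_lt.mpr hx)

theorem simpleRefl_apply_val {n u : ℕ} (hu : u + 1 < n) (x : Fin n) :
    (simpleRefl n u x : ℕ) = if x = u then u + 1 else if x = u + 1 then u else x := by
  simp only [simpleRefl, dif_pos hu, swap_apply_def, Fin.ext_iff]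
  split_ifs <;> simp_all

theorem toNatPerm_simpleRefl {n u : ℕ} (hu : u + 1 < n) :
    toNatPerm n (simpleRefl n u) = swap u (u + 1) := by
  ext x
  rcases Nat.lt_or_ge x n with hx | hx
  · rw [toNatPerm_apply_of_lt _ hx, simpleRefl_apply_val hu, swap_apply_def]
  · rw [toNatPerm_apply_of_le _ hx, swap_apply_of_ne_of_ne (by omega) (by omega)]

theorem toNatPerm_block {n a t : ℕ} (h : a + t < n) :
    toNatPerm n ((List.range t).map fun j => simpleRefl n (a + j)).prod = climb a t := by
  rw [map_list_prod, List.map_map, climb]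
  congr 1
  refine List.map_congr_left fun j hj => ?_
  exact toNatPerm_simpleRefl (by simp at hj; omega)

theorem inv_lt_inv_of_lenPerm_mul {n u : ℕ} (hu : u + 1 < n) (σ : Perm (Fin n))
    (h : lenPerm (simpleRefl n u * σ) = lenPerm (simpleRefl n u) + lenPerm σ) :
    σ⁻¹ ⟨u, by omega⟩ < σ⁻¹ ⟨u + 1, hu⟩ := by
  by_contra! hge
  -- otherwise left multiplication by `s_u` creates no inversion, and `s_u` has one
  have hsub : lenPerm (simpleRefl n u * σ) ≤ lenPerm σ := by
    refine Finset.card_le_card (Finset.monotone_filter_right _ fun p _ ⟨hp, hinv⟩ => ⟨hp, ?_⟩)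
    simp only [Perm.mul_apply, Fin.lt_def, simpleRefl_apply_val hu] at hinv ⊢
    have hne : (σ p.1 : ℕ) ≠ σ p.2 := fun he => hp.ne (σ.injective (Fin.ext he))
    by_contra! hlt
    have h1 : σ p.1 = ⟨u, by omega⟩ := Fin.ext (by split_ifs at hinv <;> omega)
    have h2 : σ p.2 = ⟨u + 1, hu⟩ := Fin.ext (by split_ifs at hinv <;> omega)
    rw [← Perm.eq_inv_iff_eq] at h1 h2
    exact hge.not_gt (h1 ▸ h2 ▸ hp)
  have hpos : 0 < lenPerm (simpleRefl n u) :=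
    Finset.card_pos.mpr ⟨(⟨u, by omega⟩, ⟨u + 1, hu⟩), by
      simp only [Finset.mem_filter, Finset.mem_univ, true_and, Fin.lt_def, simpleRefl_apply_val hu]
      simp⟩
  omega

theorem toNatPerm_inv_strictMonoOn_Icc {n lo hi : ℕ} {σ : Perm (Fin n)} (hhi : hi ≤ n - 1)
    (hred : ∀ u, lo ≤ u → u < hi →
      lenPerm (simpleRefl n u * σ) = lenPerm (simpleRefl n u) + lenPerm σ) :
    StrictMonoOn ⇑(toNatPerm n σ)⁻¹ (Icc lo hi) :=
  strictMonoOn_Icc_of_lt_add_one fun u hlo hu => by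
    rw [← map_inv, toNatPerm_apply_of_lt _ (by omega), toNatPerm_apply_of_lt _ (by omega)]
    exact inv_lt_inv_of_lenPerm_mul (by omega) σ (hred u hlo hu)

def finExtend {r : ℕ} (v : Fin r → ℕ) (d i : ℕ) : ℕ := if h : i < r then v ⟨i, h⟩ else d

@[simp]
theorem finExtend_val {r : ℕ} (v : Fin r → ℕ) (d : ℕ) (i : Fin r) : finExtend v d i = v i := by
  simp [finExtend]

theorem finExtend_self {r : ℕ} (v : Fin r → ℕ) (d : ℕ) : finExtend v d r = d := by
  simp [finExtend]

theorem finExtend_le {r d : ℕ} {k : Fin r → ℕ} (hd : ∀ i, k i ≤ d) (j : ℕ) :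
    finExtend k d j ≤ d := by
  unfold finExtend
  split_ifs
  exacts [hd _, le_rfl]

theorem strictMonoOn_finExtend {r d : ℕ} {k : Fin r → ℕ} (hk : StrictMono k) (hd : ∀ i, k i < d) :
    StrictMonoOn (finExtend k d) (Iic r) := by
  intro i hi j hj hij
  simp only [mem_Iic] at hi hj
  have hir : i < r := by omega
  rcases hj.lt_or_eq with hjr | rfl
  · simpa [finExtend, hir, hjr] using hk (show (⟨i, hir⟩ : Fin r) < ⟨j, hjr⟩ from hij)
  · simpa [finExtend, hir] using hd ⟨i, hir⟩

theorem finExtend_bounds_iff {r d : ℕ} (k t : Fin r → ℕ) :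
    ((∀ (i : Fin r) (h : i.val + 1 < r), t i ≤ k ⟨i.val + 1, h⟩ - k i) ∧
      (∀ i : Fin r, i.val + 1 = r → t i ≤ d - k i)) ↔
    ∀ i < r, finExtend t 0 i ≤ finExtend k d (i + 1) - finExtend k d i := by
  constructor
  · rintro ⟨hlt, hlast⟩ i hi
    by_cases hi1 : i + 1 < r
    · simpa [finExtend, hi, hi1] using hlt ⟨i, hi⟩ hi1
    · simpa [finExtend, hi, hi1] using hlast ⟨i, hi⟩ (show i + 1 = r by omega)
  · intro h
    refine ⟨fun i hi1 => ?_, fun i hi1 => ?_⟩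
    · simpa [finExtend, hi1] using h i i.isLt
    · simpa [finExtend, hi1] using h i i.isLt

theorem toNatPerm_prod_blocks {n r : ℕ} (d : ℕ) (k : Fin r → ℕ) (t : ℕ → ℕ)
    (h : ∀ i : Fin r, k i + t i < n) :
    toNatPerm n (List.ofFn fun i : Fin r =>
        ((List.range (t i)).map fun j => simpleRefl n (k i + j)).prod).prod =
      ((List.range r).map fun i => climb (finExtend k d i) (t i)).prod := by
  rw [map_list_prod, List.ofFn_eq_map, List.map_map, ← List.map_coe_finRange_eq_range,
    List.map_map]
  congr 1
  refine List.map_congr_left fun i _ => ?_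
  simp [toNatPerm_block (h i)]

theorem exists_toNatPerm_eq_prod_climb {n r : ℕ} {k : Fin r → ℕ} (hmono : StrictMono k)
    (hk : ∀ i, k i < n - 1) {σ : Perm (Fin n)}
    (hred : ∀ u, u + 1 < n → (∀ i, u ≠ k i) →
      lenPerm (simpleRefl n u * σ) = lenPerm (simpleRefl n u) + lenPerm σ)
    (himg : ∀ (j : Fin r) (x : Fin n), x.val < k j → (σ x).val < k j + 1) :
    ∃ t : ℕ → ℕ, (∀ i < r, t i ≤ finExtend k (n - 1) (i + 1) - finExtend k (n - 1) i) ∧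
      toNatPerm n σ = ((List.range r).map fun i => climb (finExtend k (n - 1) i) (t i)).prod := by
  set K := finExtend k (n - 1)
  have hK : StrictMonoOn K (Iic r) := strictMonoOn_finExtend hmono hk
  have hKr : K r = n - 1 := finExtend_self k (n - 1)
  have hKle : ∀ i ≤ r, ∀ j ≤ r, i ≤ j → K i ≤ K j := fun i hi j hj => hK.monotoneOn hi hj
  have hblock : ∀ lo hi, hi ≤ n - 1 → (∀ u, lo ≤ u → u < hi → ∀ j < r, u ≠ K j) →
      StrictMonoOn ⇑(toNatPerm n σ)⁻¹ (Icc lo hi) := fun lo hi hhi hne =>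
    toNatPerm_inv_strictMonoOn_Icc hhi fun u hlo hu =>
      hred u (by omega) fun j => by simpa [K] using hne u hlo hu j j.isLt
  refine exists_eq_prod_climb r hK (fun x hx => absurd hx x.not_lt_zero)
    (fun x hx => toNatPerm_apply_of_le σ (by omega))
    (hblock 0 (K 0) (hKr ▸ hKle 0 (by omega) r le_rfl (by omega)) fun u _ hu j hj => by
      have := hKle 0 (by omega) j hj.le (by omega); omega)
    (fun i hi => hblock _ _ (hKr ▸ hKle (i + 1) hi r le_rfl hi) fun u hlo hu j hj => by
      rcases Nat.lt_or_ge i j with hij | hij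
      · have := hKle (i + 1) hi j hj.le hij; omega
      · have := hKle j hj.le i hi.le hij; omega)
    fun i hi x hx => ?_
  have hKi : K i = k ⟨i, hi⟩ := finExtend_val k _ ⟨i, hi⟩
  rw [hKi] at hx ⊢
  have hxn : x < n := by have := hk ⟨i, hi⟩; omega
  rw [toNatPerm_apply_of_lt σ hxn]
  exact Nat.lt_succ_iff.mp (himg _ _ hx)

theorem unique_factorization_I_reduced_general (n r : ℕ)
    (k : Fin r → ℕ) (hmono : StrictMono k) (hk : ∀ i, k i < n - 1)
    (σ : Equiv.Perm (Fin n))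
    (hred : ∀ v ∈ Subgroup.closure
        {p : Equiv.Perm (Fin n) | ∃ j : ℕ, 1 ≤ j ∧ j ≤ n - 1 ∧
          (∀ i : Fin r, j ≠ k i + 1) ∧ p = simpleRefl n (j - 1)},
      lenPerm (v * σ) = lenPerm v + lenPerm σ)
    (himg : ∀ (j : Fin r) (x : Fin n), x.val < k j → (σ x).val < k j + 1) :
    ∃! t : Fin r → ℕ,
      (∀ (i : Fin r) (h : i.val + 1 < r), t i ≤ k ⟨i.val + 1, h⟩ - k i) ∧
      (∀ i : Fin r, i.val + 1 = r → t i ≤ n - 1 - k i) ∧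
      σ = (List.ofFn fun i : Fin r =>
        ((List.range (t i)).map fun j => simpleRefl n (k i + j)).prod).prod := by
  obtain ⟨t, ht, hσ⟩ := exists_toNatPerm_eq_prod_climb hmono hk (fun u hu hne => hred _ <|
    Subgroup.subset_closure ⟨u + 1, by omega, by omega, fun i => by simpa using hne i, by simp⟩)
    himg
  have hblocks : ∀ s : ℕ → ℕ, (∀ i < r, s i ≤ finExtend k (n - 1) (i + 1) - finExtend k (n - 1) i) →
      ∀ i : Fin r, k i + s i < n := fun s hs i => by
    have := hs i i.isLt
    have := finExtend_le (fun j => (hk j).le) (i + 1)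
    have := hk i
    simp only [finExtend_val] at *
    omega
  refine ⟨fun i => t i, ?_, ?_⟩
  · obtain ⟨h1, h2⟩ := (finExtend_bounds_iff k fun i => t i).mpr fun i hi => by
      simpa [finExtend, hi] using ht i hi
    exact ⟨h1, h2,
      toNatPerm_injective n (hσ.trans (toNatPerm_prod_blocks _ k t (hblocks t ht)).symm)⟩
  · rintro t' ⟨h1, h2, hσ'⟩
    have ht' := (finExtend_bounds_iff k t').mp ⟨h1, h2⟩
    have hprod := toNatPerm_prod_blocks (n - 1) k (finExtend t' 0) (hblocks _ ht')
    simp only [finExtend_val] at hprod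
    have := eq_of_prod_climb_eq r (strictMonoOn_finExtend hmono hk) ht' ht
      (hprod.symm.trans ((congrArg _ hσ').symm.trans hσ))
    funext i
    simpa using this i i.isLt

theorem unique_factorization_I_reduced (n r : ℕ) (hn : 2 ≤ n) (hr : 1 ≤ r)
    (k : Fin r → ℕ) (hmono : StrictMono k) (hk : ∀ i, k i < n - 1)
    (σ : Equiv.Perm (Fin n))
    (hred : ∀ v ∈ Subgroup.closure
        {p : Equiv.Perm (Fin n) | ∃ j : ℕ, 1 ≤ j ∧ j ≤ n - 1 ∧
          (∀ i : Fin r, j ≠ k i + 1) ∧ p = simpleRefl n (j - 1)},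
      lenPerm (v * σ) = lenPerm v + lenPerm σ)
    (himg : ∀ (j : Fin r) (x : Fin n), x.val < k j → (σ x).val < k j + 1) :
    ∃! t : Fin r → ℕ,
      (∀ (i : Fin r) (h : i.val + 1 < r), t i ≤ k ⟨i.val + 1, h⟩ - k i) ∧
      (∀ i : Fin r, i.val + 1 = r → t i ≤ n - 1 - k i) ∧
      σ = (List.ofFn fun i : Fin r =>
        ((List.range (t i)).map fun j => simpleRefl n (k i + j)).prod).prod :=
  unique_factorization_I_reduced_general n r k hmono hk σ hred himg
end

section
/- Let $n = 2(l-1) + h + 1$ for integers $l \geq 1$ and $h \geq 0$, let $S_n$ have simple reflections $s_1, \ldots, s_{n-1}$, and consider the permutation $x w' y$ described as follows in one-line notation with respect to indices $0 \leq k_1 < \ldots < k_r < n-1$: it sends $1 \mapsto k_1+1$, $2 \mapsto k_1, \ldots, k_1 \mapsto 2$; for each $1 \leq j \leq r-1$ it sends $k_j+1 \mapsto k_{j+1}+1$, $k_j + 2 \mapsto k_{j+1}, \ldots$ (decreasing), and it sends $k_r + 1 \mapsto n$, $k_r+2 \mapsto n-1, \ldots, n-1 \mapsto k_r+2$, $n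 \mapsto 1$. Then this permutation avoids the patterns $3412$ and $4231$. -/
/- Statement 7: the explicit permutation `x w' y` (given blockwise in one-line
notation by `K j ↦ K (j+1)`, `K j + a ↦ K (j+1) - a`, and `n-1 ↦ 0`, 0-based,
with `K 0 = 0`, `K i = k_i` for `1 ≤ i ≤ r`, `K (r+1) = n-1`) avoids the
patterns 3412 and 4231. -/

theorem pattern_avoidance (n l h r : ℕ) (hl : 1 ≤ l) (hn : n = 2 * (l - 1) + h + 1)
    (K : ℕ → ℕ) (hK0 : K 0 = 0) (hKtop : K (r + 1) = n - 1)
    (hK01 : K 0 ≤ K 1) (hKmono : ∀ i, 1 ≤ i → i ≤ r → K i < K (i + 1))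
    (π : Equiv.Perm (Fin n))
    (hblock : ∀ j ≤ r, ∀ a < K (j + 1) - K j, ∀ hx : K j + a < n,
      (π ⟨K j + a, hx⟩).val = if a = 0 then K (j + 1) else K (j + 1) - a)
    (hlast : ∀ hx : n - 1 < n, (π ⟨n - 1, hx⟩).val = 0) :
    (¬ ∃ i1 i2 i3 i4 : Fin n, i1 < i2 ∧ i2 < i3 ∧ i3 < i4 ∧
      π i3 < π i4 ∧ π i4 < π i1 ∧ π i1 < π i2) ∧
    (¬ ∃ i1 i2 i3 i4 : Fin n, i1 < i2 ∧ i2 < i3 ∧ i3 < i4 ∧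
      π i4 < π i2 ∧ π i2 < π i3 ∧ π i3 < π i1) := by
  classical
  have hn1 : 1 ≤ n := by omega
  -- monotonicity of K on indices ≤ r+1
  have Kmono : ∀ i' ≤ r + 1, ∀ i ≤ i', K i ≤ K i' := by
    intro i' hi'
    induction i' with
    | zero =>
      intro i hi
      have : i = 0 := by omega
      subst this; exact le_refl _
    | succ m ih =>
      intro i hi
      rcases Nat.eq_or_lt_of_le hi with rfl | hlt
      · exact le_refl _
      · have h1 : K i ≤ K m := ih (by omega) i (by omega)
        have h2 : K m ≤ K (m + 1) := by
          rcases Nat.eq_zero_or_pos m with rfl | hm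
          · exact hK01
          · exact le_of_lt (hKmono m hm (by omega))
        omega
  -- value bounds within a block
  have hval : ∀ j ≤ r, ∀ x : Fin n, K j ≤ x.val → x.val < K (j + 1) →
      K j < (π x).val ∧ (π x).val ≤ K (j + 1) := by
    intro j hj x h1 h2
    have hb := hblock j hj (x.val - K j) (by omega) (by omega)
    have hxe : (⟨K j + (x.val - K j), by omega⟩ : Fin n) = x := by
      apply Fin.ext; simp only [Fin.val_mk]; omega
    rw [hxe] at hb
    split_ifs at hb with h0 <;> omega
  -- within a block the values decrease
  have hdec : ∀ j ≤ r, ∀ x y : Fin n, K j ≤ x.val → x.val < y.val → y.val < K (j + 1) →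
      (π y).val < (π x).val := by
    intro j hj x y h1 h2 h3
    have hbx := hblock j hj (x.val - K j) (by omega) (by omega)
    have hby := hblock j hj (y.val - K j) (by omega) (by omega)
    have hxe : (⟨K j + (x.val - K j), by omega⟩ : Fin n) = x := by
      apply Fin.ext; simp only [Fin.val_mk]; omega
    have hye : (⟨K j + (y.val - K j), by omega⟩ : Fin n) = y := by
      apply Fin.ext; simp only [Fin.val_mk]; omega
    rw [hxe] at hbx; rw [hye] at hby
    split_ifs at hbx hby <;> omega
  -- every position < n-1 lies in some block
  have hfind : ∀ x : Fin n, x.val < n - 1 → ∃ j, j ≤ r ∧ K j ≤ x.val ∧ x.val < K (j + 1) := by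
    intro x hx
    have hP0 : (fun j => K j ≤ x.val) 0 := by simpa [hK0] using Nat.zero_le x.val
    have hspec := Nat.findGreatest_spec (P := fun j => K j ≤ x.val) (Nat.zero_le r) hP0
    refine ⟨Nat.findGreatest (fun j => K j ≤ x.val) r, Nat.findGreatest_le r, hspec, ?_⟩
    set j := Nat.findGreatest (fun j => K j ≤ x.val) r with hjdef
    by_cases hjr : j = r
    · rw [hjr, hKtop]; omega
    · have hlt : j < r := lt_of_le_of_ne (Nat.findGreatest_le r) hjr
      have hng := Nat.findGreatest_is_greatest (P := fun j => K j ≤ x.val) (n := r)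
        (k := j + 1) (by omega) (by omega)
      simp only [not_le] at hng
      omega
  -- values from a strictly earlier block are strictly smaller
  have hcross : ∀ jx ≤ r, ∀ jy ≤ r, jx < jy → ∀ x y : Fin n,
      K jx ≤ x.val → x.val < K (jx + 1) → K jy ≤ y.val → y.val < K (jy + 1) →
      (π x).val < (π y).val := by
    intro jx hjx jy hjy hlt x y h1 h2 h3 h4
    have hx := hval jx hjx x h1 h2
    have hy := hval jy hjy y h3 h4
    have hm : K (jx + 1) ≤ K jy := Kmono jy (by omega) (jx + 1) (by omega)
    omega
  -- block indices are monotone in position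
  have hord : ∀ jx ≤ r, ∀ jy ≤ r, ∀ x y : Fin n,
      K jx ≤ x.val → x.val < K (jx + 1) → K jy ≤ y.val → y.val < K (jy + 1) →
      x.val < y.val → jx ≤ jy := by
    intro jx hjx jy hjy x y h1 h2 h3 h4 hxy
    by_contra hc
    have hm : K (jy + 1) ≤ K jx := Kmono jx (by omega) (jy + 1) (by omega)
    omega
  constructor
  · rintro ⟨i1, i2, i3, i4, h12, h23, h34, p34, p41, p12⟩
    rw [Fin.lt_def] at h12 h23 h34 p34 p41 p12
    have hi4 : i4.val < n - 1 := by
      rcases Nat.lt_or_ge i4.val (n - 1) with hlt | hge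
      · exact hlt
      · exfalso
        have hi4e : i4 = (⟨n - 1, by omega⟩ : Fin n) := by
          apply Fin.ext; simp only [Fin.val_mk]; omega
        have h0 : (π i4).val = 0 := by rw [hi4e]; exact hlast (by omega)
        omega
    obtain ⟨j1, hj1, hb1a, hb1b⟩ := hfind i1 (by omega)
    obtain ⟨j2, hj2, hb2a, hb2b⟩ := hfind i2 (by omega)
    obtain ⟨j3, hj3, hb3a, hb3b⟩ := hfind i3 (by omega)
    obtain ⟨j4, hj4, hb4a, hb4b⟩ := hfind i4 (by omega)
    have hj12 : j1 < j2 := by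
      have hle : j1 ≤ j2 := hord j1 hj1 j2 hj2 i1 i2 hb1a hb1b hb2a hb2b h12
      rcases Nat.eq_or_lt_of_le hle with rfl | hlt
      · exact absurd (hdec j1 hj1 i1 i2 hb1a h12 hb2b) (by omega)
      · exact hlt
    have hj34 : j3 < j4 := by
      have hle : j3 ≤ j4 := hord j3 hj3 j4 hj4 i3 i4 hb3a hb3b hb4a hb4b h34
      rcases Nat.eq_or_lt_of_le hle with rfl | hlt
      · exact absurd (hdec j3 hj3 i3 i4 hb3a h34 hb4b) (by omega)
      · exact hlt
    have hj23 : j2 ≤ j3 := hord j2 hj2 j3 hj3 i2 i3 hb2a hb2b hb3a hb3b h23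
    have : (π i1).val < (π i3).val :=
      hcross j1 hj1 j3 hj3 (by omega) i1 i3 hb1a hb1b hb3a hb3b
    omega
  · rintro ⟨i1, i2, i3, i4, h12, h23, h34, p42, p23, p31⟩
    rw [Fin.lt_def] at h12 h23 h34 p42 p23 p31
    have hi3 : i3.val < n - 1 := by
      have := i4.isLt; omega
    obtain ⟨j1, hj1, hb1a, hb1b⟩ := hfind i1 (by omega)
    obtain ⟨j2, hj2, hb2a, hb2b⟩ := hfind i2 (by omega)
    obtain ⟨j3, hj3, hb3a, hb3b⟩ := hfind i3 (by omega)
    have hj23 : j2 < j3 := by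
      have hle : j2 ≤ j3 := hord j2 hj2 j3 hj3 i2 i3 hb2a hb2b hb3a hb3b h23
      rcases Nat.eq_or_lt_of_le hle with rfl | hlt
      · exact absurd (hdec j2 hj2 i2 i3 hb2a h23 hb3b) (by omega)
      · exact hlt
    rcases Nat.lt_or_ge i4.val (n - 1) with hi4 | hi4
    · -- i4 is in a block: π i2 < π i4, contradicting π i4 < π i2
      obtain ⟨j4, hj4, hb4a, hb4b⟩ := hfind i4 (by omega)
      have hj34 : j3 ≤ j4 := hord j3 hj3 j4 hj4 i3 i4 hb3a hb3b hb4a hb4b h34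
      have : (π i2).val < (π i4).val :=
        hcross j2 hj2 j4 hj4 (by omega) i2 i4 hb2a hb2b hb4a hb4b
      omega
    · -- i4 = n-1: use π i1 < π i3, contradicting π i3 < π i1
      have hj12 : j1 ≤ j2 := hord j1 hj1 j2 hj2 i1 i2 hb1a hb1b hb2a hb2b h12
      have : (π i1).val < (π i3).val :=
        hcross j1 hj1 j3 hj3 (by omega) i1 i3 hb1a hb1b hb3a hb3b
      omega
end

section
/- Let $A_m \subseteq A_{m-1} \subseteq \ldots \subseteq A_1 \subseteq B_1 \subseteq \ldots \subseteq B_m$ be full lattices in a vector space over the fraction field of a DVR with uniformizer $\pi$, equipped with a duality $L \mapsto L^\vee$ reversing inclusions and preserving indices ($[M:N] = [N^\vee:M^\vee]$). Suppose for each $1 \leq i \leq m$: $\pi A_i^\vee \overset{1}{\subset} B_i$, $\pi B_i^\vee \overset{1}{\subset} A_i$, and $[B_i : A_i] = h_i$, where $0 \leq h_1 < \ldots < h_m$ are given integers. Then for all $1 \leq i < m$: $[A_i : A_{i+1}] = [B_{i+1} : B_i] = (h_{i+1} - h_i)/2$. -/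
open Pointwise

variable {O : Type*} [CommRing O] [IsDomain O] [IsDiscreteValuationRing O]
variable (K : Type*) [Field K] [Algebra O K] [IsFractionRing O K]
variable {V : Type*} [AddCommGroup V] [Module K V] [Module O V] [IsScalarTower O K V]
  [SMulCommClass K O V]

/-- Multiplication of a lattice by `π^a`, `a : ℤ`. -/
noncomputable def piSm (π : O) (a : ℤ) (Λ : Submodule O V) : Submodule O V :=
  ((algebraMap O K π) ^ a) • Λ

/-- A full `O`-lattice in `V`: finitely generated and spanning `V` over `K`. -/
def IsFullLat (Λ : Submodule O V) : Prop :=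
  Λ.FG ∧ Submodule.span K (Λ : Set V) = ⊤

/-- The index `[M : N]` of lattices `N ⊆ M`: the length of the `O`-module `M/N`. -/
noncomputable def latInd (N M : Submodule O V) : ℕ∞ :=
  WithBot.unbotD 0 (Order.krullDim (Submodule O (↥M ⧸ Submodule.comap M.subtype N)))

/-
Lattice indices are lengths of quotient modules, so they are additive along chains and invariant
under `L ↦ π L`. The two chains `π A_i^∨ ⊆ B_i ⊆ B_{i+1}` and `π A_i^∨ ⊆ π A_{i+1}^∨ ⊆ B_{i+1}`
have the same ends, and their outer steps both have index 1, so
`[B_{i+1} : B_i] = [π A_{i+1}^∨ : π A_i^∨] = [A_i : A_{i+1}]`. Additivity along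
`A_{i+1} ⊆ A_i ⊆ B_i ⊆ B_{i+1}` then gives `h_{i+1} = 2 [A_i : A_{i+1}] + h_i`.
-/

open Submodule

section LatticeIndex

variable {R X : Type*} [CommRing R] [AddCommGroup X] [Module R X]

lemma latInd_eq_length (N M : Submodule R X) :
    latInd N M = Module.length R (M ⧸ N.comap M.subtype) := by
  rw [latInd, ← Module.coe_length, WithBot.unbotD_coe]

lemma latInd_add {N M P : Submodule R X} (hNM : N ≤ M) (hMP : M ≤ P) :
    latInd N P = latInd N M + latInd M P := by
  simp only [latInd_eq_length]
  refine Module.length_eq_add_of_exact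
    (mapQ (N.comap M.subtype) (N.comap P.subtype) (inclusion hMP)
      (by rw [← comap_comp, subtype_comp_inclusion]))
    (mapQ (N.comap P.subtype) (M.comap P.subtype) LinearMap.id (comap_mono hNM)) ?_ ?_ ?_
  · rw [← LinearMap.ker_eq_bot, ker_mapQ, ← comap_comp, subtype_comp_inclusion, mkQ_map_self]
  · rw [← LinearMap.range_eq_top, range_mapQ, LinearMap.range_id, Submodule.map_top, range_mkQ]
  · rw [LinearMap.exact_iff, ker_mapQ, range_mapQ, comap_id, range_inclusion]

lemma latInd_map_linearEquiv {Y : Type*} [AddCommGroup Y] [Module R Y] (e : X ≃ₗ[R] Y)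
    (N M : Submodule R X) :
    latInd (N.map (e : X →ₗ[R] Y)) (M.map (e : X →ₗ[R] Y)) = latInd N M := by
  rw [latInd_eq_length, latInd_eq_length]
  refine (Quotient.equiv _ _ (e.submoduleMap M) ?_).length_eq.symm
  ext ⟨x, hx⟩
  obtain ⟨y, hy, rfl⟩ := mem_map.mp hx
  simp only [LinearEquiv.submoduleMap, LinearEquiv.coe_coe, mem_map, mem_comap, subtype_apply,
    Subtype.exists, exists_and_left]
  constructor
  · rintro ⟨a, ha, _, hae⟩
    exact ⟨a, ha, congrArg Subtype.val hae⟩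
  · rintro ⟨a, ha, hae⟩
    obtain rfl := e.injective hae
    exact ⟨a, ha, hy, rfl⟩

lemma latInd_smul {G : Type*} [Group G] [DistribMulAction G X] [SMulCommClass G R X] (g : G)
    (N M : Submodule R X) : latInd (g • N) (g • M) = latInd N M :=
  latInd_map_linearEquiv (DistribMulAction.toLinearEquiv R X g) N M

lemma latInd_smul₀ {𝕜 : Type*} [DivisionRing 𝕜] [Module 𝕜 X] [SMulCommClass 𝕜 R X] {a : 𝕜}
    (ha : a ≠ 0) (N M : Submodule R X) : latInd (a • N) (a • M) = latInd N M :=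
  latInd_smul (Units.mk0 a ha) N M

lemma latInd_exchange {L M M' N : Submodule R X} (hLM : L ≤ M) (hMN : M ≤ N) (hLM' : L ≤ M')
    (hM'N : M' ≤ N) (h : latInd L M = latInd M' N) (hfin : latInd L M ≠ ⊤) :
    latInd M N = latInd L M' := by
  have hsum := (latInd_add hLM hMN).symm.trans (latInd_add hLM' hM'N)
  rw [h, add_comm] at hsum
  exact WithTop.add_right_cancel (h ▸ hfin) hsum

end LatticeIndex

theorem index_succ_eq
    (π : O) (hπ : Irreducible π)
    (d : Submodule O V → Submodule O V)
    (hanti : ∀ L L' : Submodule O V, L ≤ L' → d L' ≤ d L)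
    (hind : ∀ L L' : Submodule O V, L ≤ L' → latInd L L' = latInd (d L') (d L))
    (m : ℕ) (A B : ℕ → Submodule O V) (h : ℕ → ℕ)
    (hchainA : ∀ i, 1 ≤ i → i < m → A (i + 1) ≤ A i)
    (hchainB : ∀ i, 1 ≤ i → i < m → B i ≤ B (i + 1))
    (hdualA : ∀ i, 1 ≤ i → i ≤ m →
      piSm K π 1 (d (A i)) ≤ B i ∧ latInd (piSm K π 1 (d (A i))) (B i) = 1)
    (hBA : ∀ i, 1 ≤ i → i ≤ m → A i ≤ B i ∧ latInd (A i) (B i) = (h i : ℕ∞)) :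
    ∀ i, 1 ≤ i → i < m →
      latInd (A (i + 1)) (A i) = (((h (i + 1) - h i) / 2 : ℕ) : ℕ∞) ∧
      latInd (B i) (B (i + 1)) = (((h (i + 1) - h i) / 2 : ℕ) : ℕ∞) := by
  intro i hi him
  have hπK : algebraMap O K π ≠ 0 :=
    (map_ne_zero_iff _ (IsFractionRing.injective O K)).mpr hπ.ne_zero
  have hpiSm : ∀ L : Submodule O V, piSm K π 1 L = algebraMap O K π • L := fun L => by
    rw [piSm, zpow_one]
  obtain ⟨hAB, hh⟩ := hBA i hi him.le
  obtain ⟨-, hh'⟩ := hBA (i + 1) (by omega) him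
  obtain ⟨hdA, hdA_ind⟩ := hdualA i hi him.le
  obtain ⟨hdA', hdA'_ind⟩ := hdualA (i + 1) (by omega) him
  rw [hpiSm] at hdA hdA_ind hdA' hdA'_ind
  have hA := hchainA i hi him
  have hB := hchainB i hi him
  have hBA_eq : latInd (B i) (B (i + 1)) = latInd (A (i + 1)) (A i) := by
    rw [hind _ _ hA, ← latInd_smul₀ hπK (d (A i)) (d (A (i + 1)))]
    exact latInd_exchange hdA hB (smul_mono_right _ (hanti _ _ hA)) hdA'
      (hdA_ind.trans hdA'_ind.symm) (by simp [hdA_ind])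
  have htotal : (h (i + 1) : ℕ∞) =
      latInd (A (i + 1)) (A i) + h i + latInd (B i) (B (i + 1)) := by
    rw [← hh', ← hh, latInd_add (hA.trans hAB) hB, latInd_add hA hAB]
  rw [hBA_eq] at htotal ⊢
  obtain ⟨n, hn⟩ : ∃ n : ℕ, (n : ℕ∞) = latInd (A (i + 1)) (A i) :=
    ENat.ne_top_iff_exists.mp fun htop => by simp [htop] at htotal
  rw [← hn] at htotal ⊢
  have hnat : h (i + 1) = n + h i + n := by exact_mod_cast htotal
  rw [show (h (i + 1) - h i) / 2 = n by omega]
  exact ⟨rfl, rfl⟩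
end
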